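/- arXiv:2204.11130 — 2 statements merged into one kernel-verified Lean document; each statement's English description precedes it below -/
import Mathlib

section
/- Let π be the free group on x-independent generators γ₁, …, γₙ (with γ∞ := (γₙ⋯γ₁)⁻¹), let X = {x₁, …, x_d}, and define a right action of π on the free left π-set π × X by: x₁·γ₁ = γ∞γₙ·x₂; x_i·γ₁ = x_{i+1} for 1 < i < d; x_d·γ₁ = γ∞⁻¹·x₁; x₁·γ_{j+1} = γ_j·x₁ and x_i·γ_{j+1} = x_i for 1 < i ≤ d, 1 ≤ j < n; x₁·γ∞' = γ∞·x_d and x_{i+1}·γ∞' = x_i for 1 ≤ i < d, where γ∞' denotes the abstract generator γ∞. Then this assignment extends to a well-defined right π-action on π × X commuting with the free left π-action; equivalently, the induced permutation-with-cocycle data satisfies the relation γ∞γₙ⋯γ₁ = 1, i.e. applying the right actions of γ₁, then γ₂, …, γₙ, then γ∞ to each x_i returns x_i with trivial accumulated left factor. -/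
/-!
Every entry of the table only multiplies the left factor on the right, so the action commutes
with left multiplication. For the relator write `xᵢ = x_{j+1}`: `γ∞` moves it to `x_j`, picking up
`γ∞` exactly when `j` is the last index; `γₙ, …, γ₂` fix every `x_j` except `x₁`, on which they
accumulate `γₙ₋₁ ⋯ γ₁`; and `γ₁` moves `x_j` back to `x_{j+1}`. The three cases `j` last, `j` first
(distinct since `d ≥ 2`) and `j` in between leave the left factors `γ∞ γ∞⁻¹`,
`γₙ₋₁ ⋯ γ₁ γ∞ γₙ` and `1`, all trivial because `γ∞⁻¹ = γₙ ⋯ γ₁`.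
-/

/-- `π` is the free group on `γ₁,…,γₙ` (0-based indices). -/
abbrev F (n : ℕ) := FreeGroup (Fin n)

/-- The generator `γ_{k+1}` for `k < n` (and `1` otherwise). -/
def gn (n : ℕ) (k : ℕ) : F n := if h : k < n then FreeGroup.of (⟨k, h⟩ : Fin n) else 1

/-- `γ∞ := (γₙ γₙ₋₁ ⋯ γ₁)⁻¹`. -/
def gInf (n : ℕ) : F n := (((List.range n).reverse.map (gn n)).prod)⁻¹

/-- The right action of the abstract generators `γ₁,…,γₙ,γ∞` (encoded as
`Sum.inl 0, …, Sum.inl (n-1), Sum.inr ()`) on the basis data `π × {x₁,…,x_d}`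
of the biset `𝔅(f)` of `f(z) = z^d + c`:
`x₁·γ₁ = γ∞γₙ·x₂`, `x_i·γ₁ = x_{i+1}` for `1 < i < d`, `x_d·γ₁ = γ∞⁻¹·x₁`;
`x₁·γ_{j+1} = γ_j·x₁`, `x_i·γ_{j+1} = x_i` for `i > 1`;
`x₁·γ∞ = γ∞·x_d`, `x_{i+1}·γ∞ = x_i`.
(Cyclic index shifts are implemented by `finRotate d : i ↦ i + 1`.) -/
def step (n d : ℕ) (s : Sum (Fin n) Unit) (b : F n × Fin d) : F n × Fin d :=
  match s with
  | Sum.inl j =>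
      if j.val = 0 then
        -- action of γ₁
        if b.2.val = 0 then (b.1 * gInf n * gn n (n - 1), finRotate d b.2)
        else if b.2.val = d - 1 then (b.1 * (gInf n)⁻¹, finRotate d b.2)
        else (b.1, finRotate d b.2)
      else
        -- action of γ_{j+1}, 1 ≤ j ≤ n-1 (paper indexing)
        if b.2.val = 0 then (b.1 * gn n (j.val - 1), b.2) else b
  | Sum.inr _ =>
      -- action of γ∞
      if b.2.val = 0 then (b.1 * gInf n, (finRotate d).symm b.2)
      else (b.1, (finRotate d).symm b.2)

theorem List.ofFn_comp_val_eq_map_range {α : Type*} (m : ℕ) (f : ℕ → α) :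
    List.ofFn (fun k : Fin m => f k) = (List.range m).map f :=
  List.ext_getElem (by simp) (by simp)

section

variable {n d : ℕ}

theorem step_mul_left (s : Fin n ⊕ Unit) (a : F n) (b : F n × Fin d) :
    step n d s (a * b.1, b.2) = (a * (step n d s b).1, (step n d s b).2) := by
  cases s <;> simp only [step] <;> split_ifs <;> simp [mul_assoc]

theorem step_inr_finRotate (u : Unit) (g : F n) (j : Fin d) :
    step n d (Sum.inr u) (g, finRotate d j) = (if j.val = d - 1 then g * gInf n else g, j) := by
  obtain ⟨e, rfl⟩ : ∃ e, d = e + 1 := ⟨d - 1, by have := j.pos; omega⟩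
  have hrot : (finRotate (e + 1) j).val = 0 ↔ j.val = e := by
    rw [coe_finRotate]; split_ifs with h <;> simp [Fin.ext_iff] at h ⊢ <;> omega
  simp only [step, hrot, Equiv.symm_apply_apply, Nat.add_sub_cancel]
  split_ifs <;> rfl

theorem foldl_step_inl_of_ne_zero (l : List (Fin n)) (hl : ∀ j ∈ l, j.val ≠ 0)
    (b : F n × Fin d) :
    (l.map Sum.inl).foldl (fun b s => step n d s b) b
      = if b.2.val = 0 then (b.1 * (l.map fun j => gn n (j.val - 1)).prod, b.2) else b := by
  induction l generalizing b with
  | nil => simp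
  | cons j l ih =>
    rw [List.map_cons, List.foldl_cons, ih fun k hk => hl k (List.mem_cons_of_mem _ hk)]
    by_cases hb : b.2.val = 0 <;> simp [step, hl j List.mem_cons_self, hb, mul_assoc]

end

theorem gInf_succ (m : ℕ) :
    gInf (m + 1)
      = (gn (m + 1) m * (List.ofFn fun k : Fin m => gn (m + 1) k).reverse.prod)⁻¹ := by
  simp [gInf, List.range_succ, List.ofFn_comp_val_eq_map_range, List.map_reverse]

theorem reverse_ofFn_inl (m : ℕ) :
    (List.ofFn fun k : Fin (m + 1) => (Sum.inl k : Fin (m + 1) ⊕ Unit)).reverse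
      = ((List.ofFn fun k : Fin m => k.succ).reverse.map Sum.inl) ++ [Sum.inl 0] := by
  simp [List.ofFn_succ, List.map_reverse, Function.comp_def]

theorem foldl_step_relator (m d : ℕ) (hd : 2 ≤ d) (i : Fin d) :
    ((Sum.inr () : Fin (m + 1) ⊕ Unit) ::
        (List.ofFn fun k : Fin (m + 1) => (Sum.inl k : Fin (m + 1) ⊕ Unit)).reverse).foldl
      (fun b s => step (m + 1) d s b) ((1 : F (m + 1)), i) = (1, i) := by
  obtain ⟨j, rfl⟩ := (finRotate d).surjective i
  have hsucc : ∀ k ∈ (List.ofFn fun k : Fin m => k.succ).reverse, k.val ≠ 0 := by simp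
  rw [List.foldl_cons, reverse_ofFn_inl, List.foldl_append, step_inr_finRotate,
    foldl_step_inl_of_ne_zero _ hsucc]
  simp only [List.map_reverse, List.map_ofFn, Function.comp_def, Fin.val_succ,
    Nat.add_sub_cancel, one_mul]
  have hd1 : d - 1 ≠ 0 := by omega
  rcases eq_or_ne j.val (d - 1) with hlast | hlast
  · simp [step, hlast, hd1]
  rcases eq_or_ne j.val 0 with hzero | hzero
  · simp [step, hzero, hd1.symm, gInf_succ]
  · simp [step, hlast, hzero]

/-- The table above extends to a well-defined right `π`-action on `π × {x₁,…,x_d}`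
commuting with the free left `π`-action: each generator's action commutes with left
multiplication, and the relation element `γ∞γₙ⋯γ₁` acts trivially: applying the successive right
actions of the letters of `γ∞γₙ⋯γ₁` to each basis element `x_i` returns `x_i`
with trivial accumulated left factor. -/
theorem stmt5 (n d : ℕ) (hn : 1 ≤ n) (hd : 2 ≤ d) :
    (∀ (s : Sum (Fin n) Unit) (a : F n) (b : F n × Fin d),
      step n d s (a * b.1, b.2) = (a * (step n d s b).1, (step n d s b).2)) ∧
    (∀ i : Fin d,
      ((Sum.inr () : Sum (Fin n) Unit) ::
          (List.ofFn (fun k : Fin n => (Sum.inl k : Sum (Fin n) Unit))).reverse).foldl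
        (fun b s => step n d s b) ((1 : F n), i) = (1, i)) := by
  obtain ⟨m, rfl⟩ : ∃ m, n = m + 1 := ⟨n - 1, by omega⟩
  exact ⟨step_mul_left, foldl_step_relator m d hd⟩
end

section
/- With the biset 𝔅(f) of the previous context (right π-action on basis x₁,…,x_d given by the stated table), the right action of the relation element r = γ∞ γₙ γₙ₋₁ ⋯ γ₁ on each basis element x_i equals the identity: x_i · r = x_i with trivial left coefficient, for all 1 ≤ i ≤ d. -/
section

variable {n d : ℕ}

lemma step_inr (g : F n) (i : Fin d) :
    step n d (Sum.inr ()) (g, i) = (if i.val = 0 then g * gInf n else g, (finRotate d).symm i) := by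
  split_ifs with h <;> simp [step, h]

lemma step_inl_of_val_ne_zero {a : Fin n} (ha : a.val ≠ 0) (g : F n) (i : Fin d) :
    step n d (Sum.inl a) (g, i) = (if i.val = 0 then g * gn n (a.val - 1) else g, i) := by
  split_ifs with h <;> simp [step, ha, h]

lemma foldl_step_inl_of_val_ne_zero {l : List (Fin n)} (hl : ∀ a ∈ l, a.val ≠ 0) (g : F n)
    (i : Fin d) :
    (l.map Sum.inl).foldl (fun b s => step n d s b) (g, i) =
      (if i.val = 0 then g * (l.map fun a => gn n (a.val - 1)).prod else g, i) := by
  induction l generalizing g with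
  | nil => simp
  | cons a l ih =>
    rw [List.map_cons, List.foldl_cons, step_inl_of_val_ne_zero (hl a (by simp)),
      ih fun b hb => hl b (by simp [hb])]
    split_ifs <;> simp [mul_assoc]

end

section

variable {m e : ℕ}

lemma step_inl_zero_zero (g : F (m + 1)) :
    step (m + 1) (e + 2) (Sum.inl 0) (g, 0) = (g * gInf (m + 1) * gn (m + 1) m, 1) := by
  simp [step]

lemma step_inl_zero_last (g : F (m + 1)) :
    step (m + 1) (e + 2) (Sum.inl 0) (g, Fin.last (e + 1)) = (g * (gInf (m + 1))⁻¹, 0) := by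
  simp [step]

lemma step_inl_zero_of_ne (g : F (m + 1)) {i : Fin (e + 2)} (h0 : i ≠ 0)
    (hl : i ≠ Fin.last (e + 1)) :
    step (m + 1) (e + 2) (Sum.inl 0) (g, i) = (g, finRotate (e + 2) i) := by
  have hval : i.val ≠ e + 1 := fun h => hl (Fin.ext h)
  simp [step, Fin.val_ne_zero_iff.mpr h0, hval]

end

lemma prod_mul_gInf_mul_gn (m : ℕ) :
    (List.ofFn fun k : Fin m => gn (m + 1) k).reverse.prod * gInf (m + 1) * gn (m + 1) m = 1 := by
  have : List.ofFn (fun k : Fin m => gn (m + 1) k) = (List.range m).map (gn (m + 1)) :=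
    List.ext_getElem (by simp) (by simp)
  simp [gInf, this, List.range_succ, List.map_reverse]

lemma reverse_ofFn_inl_eq_append (m : ℕ) :
    (List.ofFn fun k : Fin (m + 1) => (Sum.inl k : Fin (m + 1) ⊕ Unit)).reverse =
      ((List.ofFn Fin.succ).reverse.map Sum.inl) ++ [Sum.inl 0] := by
  simp [List.ofFn_succ, List.map_reverse, List.map_ofFn, Function.comp_def]

/-- The right action of the relation element `r = γ∞ γₙ γₙ₋₁ ⋯ γ₁` on each basis
element `x_i` equals the identity: `x_i · r = x_i` with trivial left coefficient,
for all `1 ≤ i ≤ d`. -/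
theorem stmt6 (n d : ℕ) (hn : 1 ≤ n) (hd : 2 ≤ d) :
    ∀ i : Fin d,
      ((Sum.inr () : Sum (Fin n) Unit) ::
          (List.ofFn (fun k : Fin n => (Sum.inl k : Sum (Fin n) Unit))).reverse).foldl
        (fun b s => step n d s b) ((1 : F n), i) = (1, i) := by
  obtain ⟨m, rfl⟩ : ∃ m, n = m + 1 := ⟨n - 1, by omega⟩
  obtain ⟨e, rfl⟩ : ∃ e, d = e + 2 := ⟨d - 2, by omega⟩
  intro i
  obtain ⟨j, rfl⟩ := (finRotate (e + 2)).surjective i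
  have hsucc : ∀ a ∈ (List.ofFn (Fin.succ : Fin m → Fin (m + 1))).reverse, a.val ≠ 0 := by simp
  rw [reverse_ofFn_inl_eq_append, List.foldl_cons, List.foldl_append, step_inr,
    Equiv.symm_apply_apply, foldl_step_inl_of_val_ne_zero hsucc, List.foldl_cons, List.foldl_nil]
  by_cases hlast : j = Fin.last (e + 1)
  · subst hlast
    simp [step_inl_zero_last]
  by_cases hzero : j = 0
  · subst hzero
    simp [step_inl_zero_zero, Function.comp_def, prod_mul_gInf_mul_gn]
  · have hrot : finRotate (e + 2) j ≠ 0 := by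
      rw [← finRotate_last]
      exact (finRotate _).injective.ne hlast
    simp only [Fin.val_eq_zero_iff, hrot, hzero, if_false]
    exact step_inl_zero_of_ne _ hzero hlast
end
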